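/- arXiv:2506.19245 — 3 statements merged into one kernel-verified Lean document; each statement's English description precedes it below -/
import Mathlib

section
/- Let ψ : ℝⁿ → ℝ be integrable, bounded, strictly positive almost everywhere, and suppose there exist C > 0 and s > n/2 such that ψ(λ) ≤ C·(1 + ‖λ‖²)^{−s} for almost every λ ∈ ℝⁿ. Then there exists a constant κ > 0 such that every f ∈ L²(ℝⁿ, ℂ) with 𝓕f/√ψ ∈ L²(ℝⁿ, ℂ) has a bounded continuous representative f̃ (namely f̃(x) = ∫_{ℝⁿ} 𝓕f(λ) e^{2πi⟨x,λ⟩} dλ) satisfying sup_{x ∈ ℝⁿ} |f̃(x)| ≤ κ · ‖𝓕f/√ψ‖_{L²}. -/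
open MeasureTheory Complex Real
open scoped FourierTransform

/-!
Since `ψ` is integrable, `√ψ ∈ L²`, so by Cauchy–Schwarz `F f = (F f / √ψ) · √ψ` is integrable with
`‖F f‖₁ ≤ ‖√ψ‖₂ · ‖F f / √ψ‖₂`. The inverse Fourier integral of an `L¹` function is continuous and
bounded by its `L¹` norm. It is a representative of `f`: against a smooth compactly supported real
test function `w`, unitarity of `F` and self-adjointness of the Fourier integral on `L¹` give
`∫ w f = ∫ conj (𝓕 w) · F f = ∫ 𝓕⁻ w · F f = ∫ w · 𝓕⁻ (F f)`.
-/

section WeightedL2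

variable {α 𝕜 : Type*} [MeasurableSpace α] {μ : Measure α} [RCLike 𝕜] {ψ : α → ℝ}

theorem memLp_two_sqrt (hψ : Integrable ψ μ) (hψ0 : 0 ≤ᵐ[μ] ψ) :
    MemLp (fun x => √(ψ x)) 2 μ := by
  refine (memLp_two_iff_integrable_sq (by fun_prop)).2 (hψ.congr ?_)
  filter_upwards [hψ0] with x hx
  exact (sq_sqrt hx).symm

theorem integral_norm_mul_sqrt_le {u : α → 𝕜} (hu : MemLp u 2 μ) (hψ : Integrable ψ μ)
    (hψ0 : 0 ≤ᵐ[μ] ψ) :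
    ∫ x, ‖u x‖ * √(ψ x) ∂μ ≤ (eLpNorm u 2 μ).toReal * √(∫ x, ψ x ∂μ) := by
  have holder := integral_mul_norm_le_Lp_mul_Lq Real.HolderConjugate.two_two
    (by simpa using hu.norm) (by simpa using memLp_two_sqrt hψ hψ0)
  have hsq : ∫ x, √(ψ x) ^ (2 : ℝ) ∂μ = ∫ x, ψ x ∂μ := by
    refine integral_congr_ae ?_
    filter_upwards [hψ0] with x hx
    rw [rpow_two, sq_sqrt hx]
  simp only [norm_norm, norm_of_nonneg (sqrt_nonneg _), hsq] at holder
  rw [hu.eLpNorm_eq_integral_rpow_norm two_ne_zero ENNReal.ofNat_ne_top,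
    ENNReal.toReal_ofReal (by positivity), sqrt_eq_rpow]
  simpa using holder

theorem div_sqrt_mul_sqrt_ae_eq (hψ0 : ∀ᵐ x ∂μ, 0 < ψ x) (g : α → 𝕜) :
    (fun x => g x / (√(ψ x) : 𝕜) * (√(ψ x) : 𝕜)) =ᵐ[μ] g := by
  filter_upwards [hψ0] with x hx
  exact div_mul_cancel₀ _ (RCLike.ofReal_ne_zero.2 (sqrt_pos.2 hx).ne')

theorem integrable_of_memLp_div_sqrt {g : α → 𝕜} (hψ : Integrable ψ μ) (hψ0 : ∀ᵐ x ∂μ, 0 < ψ x)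
    (hg : MemLp (fun x => g x / (√(ψ x) : 𝕜)) 2 μ) : Integrable g μ :=
  (hg.integrable_mul (memLp_two_sqrt hψ (hψ0.mono fun _ hx => hx.le)).ofReal).congr
    (div_sqrt_mul_sqrt_ae_eq hψ0 g)

theorem integral_norm_le_of_memLp_div_sqrt {g : α → 𝕜} (hψ : Integrable ψ μ)
    (hψ0 : ∀ᵐ x ∂μ, 0 < ψ x) (hg : MemLp (fun x => g x / (√(ψ x) : 𝕜)) 2 μ) :
    ∫ x, ‖g x‖ ∂μ ≤ (eLpNorm (fun x => g x / (√(ψ x) : 𝕜)) 2 μ).toReal * √(∫ x, ψ x ∂μ) :=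
  calc ∫ x, ‖g x‖ ∂μ = ∫ x, ‖g x / (√(ψ x) : 𝕜)‖ * √(ψ x) ∂μ := by
        refine integral_congr_ae ?_
        filter_upwards [div_sqrt_mul_sqrt_ae_eq hψ0 g] with x hx
        conv_lhs => rw [← hx]
        rw [norm_mul, RCLike.norm_ofReal, abs_of_nonneg (sqrt_nonneg _)]
    _ ≤ _ := integral_norm_mul_sqrt_le hg hψ (hψ0.mono fun _ hx => hx.le)

end WeightedL2

theorem LinearIsometryEquiv.integral_conj_mul_map {α : Type*} [MeasurableSpace α] {μ : Measure α}
    (F : Lp ℂ 2 μ ≃ₗᵢ[ℂ] Lp ℂ 2 μ) {u f : α → ℂ} (hu : MemLp u 2 μ) (hf : MemLp f 2 μ) :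
    ∫ x, (starRingEnd ℂ) (u x) * f x ∂μ =
      ∫ ξ, (starRingEnd ℂ) (F (hu.toLp u) ξ) * F (hf.toLp f) ξ ∂μ :=
  calc ∫ x, (starRingEnd ℂ) (u x) * f x ∂μ = inner ℂ (hu.toLp u) (hf.toLp f) := by
        rw [L2.inner_def]
        refine integral_congr_ae ?_
        filter_upwards [hu.coeFn_toLp, hf.coeFn_toLp] with x hux hfx
        rw [hux, hfx, RCLike.inner_apply, mul_comm]
    _ = inner ℂ (F (hu.toLp u)) (F (hf.toLp f)) := (F.inner_map_map _ _).symm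
    _ = _ := by simp only [L2.inner_def, RCLike.inner_apply, mul_comm]

section Fourier

variable {V : Type*} [NormedAddCommGroup V] [InnerProductSpace ℝ V] [FiniteDimensional ℝ V]
  [MeasurableSpace V] [BorelSpace V]

theorem integral_mul_exp_inner_eq_fourierInv (g : V → ℂ) (z : V) :
    ∫ l, g l * exp (2 * π * I * ((inner ℝ z l : ℝ) : ℂ)) = 𝓕⁻ g z := by
  rw [Real.fourierInv_eq']
  congr with l
  rw [real_inner_comm, smul_eq_mul, mul_comm]
  push_cast
  ring_nf

theorem continuous_fourierInv_of_integrable {E : Type*} [NormedAddCommGroup E] [NormedSpace ℂ E]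
    {g : V → E} (hg : Integrable g) : Continuous (𝓕⁻ g) :=
  VectorFourier.fourierIntegral_continuous Real.continuous_fourierChar
    (continuous_fst.inner continuous_snd).neg hg

theorem norm_fourierInv_le_integral_norm {E : Type*} [NormedAddCommGroup E] [NormedSpace ℂ E]
    (g : V → E) (w : V) : ‖𝓕⁻ g w‖ ≤ ∫ v, ‖g v‖ :=
  VectorFourier.norm_fourierIntegral_le_integral_norm _ _ _ _ _

theorem conj_fourier_eq_fourierInv_conj (u : V → ℂ) (ξ : V) :
    (starRingEnd ℂ) (𝓕 u ξ) = 𝓕⁻ (fun x => (starRingEnd ℂ) (u x)) ξ := by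
  rw [Real.fourier_eq', Real.fourierInv_eq', ← integral_conj]
  congr with x
  simp [← Complex.exp_conj, map_ofNat]

theorem integral_mul_fourierInv_eq_integral_fourierInv_mul {u g : V → ℂ} (hu : Integrable u)
    (hg : Integrable g) :
    ∫ x, u x * 𝓕⁻ g x = ∫ ξ, 𝓕⁻ u ξ * g ξ := by
  have hflip : (-innerₗ V).flip = -innerₗ V := by
    ext x y
    simp [real_inner_comm]
  have hswap := VectorFourier.integral_fourierIntegral_smul_eq_flip (L := -innerₗ V)
    Real.continuous_fourierChar (continuous_fst.inner continuous_snd).neg hu hg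
  rw [hflip] at hswap
  exact hswap.symm

theorem ae_eq_fourierInv_of_integrable
    (F : Lp ℂ 2 (volume : Measure V) ≃ₗᵢ[ℂ] Lp ℂ 2 (volume : Measure V))
    (hF : ∀ (g : V → ℂ), Integrable g → ∀ hg2 : MemLp g 2 volume,
      (F (hg2.toLp g) : V → ℂ) =ᵐ[volume] 𝓕 g)
    {f : V → ℂ} (hf : MemLp f 2 volume)
    (hFf : Integrable (F (hf.toLp f) : V → ℂ)) : f =ᵐ[volume] 𝓕⁻ (F (hf.toLp f) : V → ℂ) := by
  refine ae_eq_of_integral_contDiff_smul_eq (hf.locallyIntegrable one_le_two)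
    (continuous_fourierInv_of_integrable hFf).locallyIntegrable fun w _ hws => ?_
  set W : V → ℂ := fun x => (w x : ℂ)
  have hWc : Continuous W := by fun_prop
  have hWs : HasCompactSupport W := hws.comp_left ofReal_zero
  have hW1 : Integrable W := hWc.integrable_of_hasCompactSupport hWs
  have hW2 : MemLp W 2 volume := hWc.memLp_of_hasCompactSupport hWs
  have hWconj : ∀ x, (starRingEnd ℂ) (W x) = W x := fun x => conj_ofReal _
  simp only [real_smul]
  calc ∫ x, W x * f x = ∫ x, (starRingEnd ℂ) (W x) * f x := by simp only [hWconj]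
    _ = ∫ ξ, (starRingEnd ℂ) (F (hW2.toLp W) ξ) * F (hf.toLp f) ξ := F.integral_conj_mul_map hW2 hf
    _ = ∫ ξ, (starRingEnd ℂ) (𝓕 W ξ) * F (hf.toLp f) ξ := by
        refine integral_congr_ae ?_
        filter_upwards [hF W hW1 hW2] with ξ hξ
        rw [hξ]
    _ = ∫ ξ, 𝓕⁻ W ξ * F (hf.toLp f) ξ := by simp only [conj_fourier_eq_fourierInv_conj, hWconj]
    _ = ∫ x, W x * 𝓕⁻ (F (hf.toLp f) : V → ℂ) x :=
        (integral_mul_fourierInv_eq_integral_fourierInv_mul hW1 hFf).symm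

end Fourier

theorem rkhs_embeds_into_bounded_continuous_general
    {n : ℕ}
    (F : Lp ℂ 2 (volume : Measure (EuclideanSpace ℝ (Fin n))) ≃ₗᵢ[ℂ]
         Lp ℂ 2 (volume : Measure (EuclideanSpace ℝ (Fin n))))
    (hF : ∀ (g : EuclideanSpace ℝ (Fin n) → ℂ) (hg1 : Integrable g)
      (hg2 : MemLp g 2 (volume : Measure (EuclideanSpace ℝ (Fin n)))),
      (F (hg2.toLp g) : EuclideanSpace ℝ (Fin n) → ℂ) =ᵐ[volume] 𝓕 g)
    (ψ : EuclideanSpace ℝ (Fin n) → ℝ)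
    (hψi : Integrable ψ (volume : Measure (EuclideanSpace ℝ (Fin n))))
    (hψ0 : ∀ᵐ l ∂(volume : Measure (EuclideanSpace ℝ (Fin n))), 0 < ψ l) :
    ∃ κ : ℝ, 0 < κ ∧
      ∀ (f : EuclideanSpace ℝ (Fin n) → ℂ)
        (hf2 : MemLp f 2 (volume : Measure (EuclideanSpace ℝ (Fin n)))),
        MemLp (fun l => (F (hf2.toLp f) : EuclideanSpace ℝ (Fin n) → ℂ) l /
            ((Real.sqrt (ψ l) : ℝ) : ℂ)) 2 (volume : Measure (EuclideanSpace ℝ (Fin n))) →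
          Integrable (fun l => (F (hf2.toLp f) : EuclideanSpace ℝ (Fin n) → ℂ) l)
            (volume : Measure (EuclideanSpace ℝ (Fin n))) ∧
          Continuous (fun z : EuclideanSpace ℝ (Fin n) =>
            ∫ l : EuclideanSpace ℝ (Fin n),
              (F (hf2.toLp f) : EuclideanSpace ℝ (Fin n) → ℂ) l *
                Complex.exp (2 * (π : ℂ) * Complex.I * ((inner ℝ z l : ℝ) : ℂ))) ∧
          (f =ᵐ[volume] fun z : EuclideanSpace ℝ (Fin n) =>
            ∫ l : EuclideanSpace ℝ (Fin n),
              (F (hf2.toLp f) : EuclideanSpace ℝ (Fin n) → ℂ) l *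
                Complex.exp (2 * (π : ℂ) * Complex.I * ((inner ℝ z l : ℝ) : ℂ))) ∧
          ∀ x : EuclideanSpace ℝ (Fin n),
            ‖∫ l : EuclideanSpace ℝ (Fin n),
                (F (hf2.toLp f) : EuclideanSpace ℝ (Fin n) → ℂ) l *
                  Complex.exp (2 * (π : ℂ) * Complex.I * ((inner ℝ x l : ℝ) : ℂ))‖ ≤
              κ * (eLpNorm (fun l => (F (hf2.toLp f) : EuclideanSpace ℝ (Fin n) → ℂ) l /
                    ((Real.sqrt (ψ l) : ℝ) : ℂ)) 2
                  (volume : Measure (EuclideanSpace ℝ (Fin n)))).toReal := by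
  refine ⟨√(∫ l, ψ l) + 1, by positivity, fun f hf2 hh => ?_⟩
  simp only [integral_mul_exp_inner_eq_fourierInv]
  have hFf : Integrable (F (hf2.toLp f) : EuclideanSpace ℝ (Fin n) → ℂ) :=
    integrable_of_memLp_div_sqrt hψi hψ0 hh
  refine ⟨hFf, continuous_fourierInv_of_integrable hFf,
    ae_eq_fourierInv_of_integrable F hF hf2 hFf, fun x => ?_⟩
  calc ‖𝓕⁻ (F (hf2.toLp f) : EuclideanSpace ℝ (Fin n) → ℂ) x‖
      ≤ ∫ l, ‖(F (hf2.toLp f) : EuclideanSpace ℝ (Fin n) → ℂ) l‖ :=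
        norm_fourierInv_le_integral_norm _ x
    _ ≤ _ * √(∫ l, ψ l) := integral_norm_le_of_memLp_div_sqrt hψi hψ0 hh
    _ ≤ _ := by
        rw [mul_comm]
        exact mul_le_mul_of_nonneg_right (le_add_of_nonneg_right zero_le_one) ENNReal.toReal_nonneg

/-- Let `F` be the Fourier–Plancherel transform on `L²(ℝⁿ, ℂ)` (any unitary
operator agreeing with the Fourier integral on `L¹ ∩ L²`). Let `ψ : ℝⁿ → ℝ` be integrable,
bounded, a.e. strictly positive, with `ψ λ ≤ C (1 + ‖λ‖²)^{-s}` a.e. for some `C > 0` and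
`s > n/2`. Then there is `κ > 0` such that every `f ∈ L²` with `F f / √ψ ∈ L²` has a bounded
continuous representative `f̃ z = ∫ λ, F f λ * exp(2πi⟪z,λ⟫)` with
`sup_x ‖f̃ x‖ ≤ κ · ‖F f / √ψ‖_{L²}`. -/
theorem rkhs_embeds_into_bounded_continuous
    {n : ℕ}
    (F : Lp ℂ 2 (volume : Measure (EuclideanSpace ℝ (Fin n))) ≃ₗᵢ[ℂ]
         Lp ℂ 2 (volume : Measure (EuclideanSpace ℝ (Fin n))))
    (hF : ∀ (g : EuclideanSpace ℝ (Fin n) → ℂ) (hg1 : Integrable g)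
      (hg2 : MemLp g 2 (volume : Measure (EuclideanSpace ℝ (Fin n)))),
      (F (hg2.toLp g) : EuclideanSpace ℝ (Fin n) → ℂ) =ᵐ[volume] 𝓕 g)
    (ψ : EuclideanSpace ℝ (Fin n) → ℝ)
    (hψi : Integrable ψ (volume : Measure (EuclideanSpace ℝ (Fin n))))
    (hψb : ∃ C : ℝ, ∀ l, |ψ l| ≤ C)
    (hψ0 : ∀ᵐ l ∂(volume : Measure (EuclideanSpace ℝ (Fin n))), 0 < ψ l)
    (C s : ℝ) (hC : 0 < C) (hs : (n : ℝ) / 2 < s)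
    (hdec : ∀ᵐ l ∂(volume : Measure (EuclideanSpace ℝ (Fin n))),
      ψ l ≤ C * (1 + ‖l‖ ^ 2) ^ (-s)) :
    ∃ κ : ℝ, 0 < κ ∧
      ∀ (f : EuclideanSpace ℝ (Fin n) → ℂ)
        (hf2 : MemLp f 2 (volume : Measure (EuclideanSpace ℝ (Fin n)))),
        MemLp (fun l => (F (hf2.toLp f) : EuclideanSpace ℝ (Fin n) → ℂ) l /
            ((Real.sqrt (ψ l) : ℝ) : ℂ)) 2 (volume : Measure (EuclideanSpace ℝ (Fin n))) →
          Integrable (fun l => (F (hf2.toLp f) : EuclideanSpace ℝ (Fin n) → ℂ) l)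
            (volume : Measure (EuclideanSpace ℝ (Fin n))) ∧
          Continuous (fun z : EuclideanSpace ℝ (Fin n) =>
            ∫ l : EuclideanSpace ℝ (Fin n),
              (F (hf2.toLp f) : EuclideanSpace ℝ (Fin n) → ℂ) l *
                Complex.exp (2 * (π : ℂ) * Complex.I * ((inner ℝ z l : ℝ) : ℂ))) ∧
          (f =ᵐ[volume] fun z : EuclideanSpace ℝ (Fin n) =>
            ∫ l : EuclideanSpace ℝ (Fin n),
              (F (hf2.toLp f) : EuclideanSpace ℝ (Fin n) → ℂ) l *
                Complex.exp (2 * (π : ℂ) * Complex.I * ((inner ℝ z l : ℝ) : ℂ))) ∧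
          ∀ x : EuclideanSpace ℝ (Fin n),
            ‖∫ l : EuclideanSpace ℝ (Fin n),
                (F (hf2.toLp f) : EuclideanSpace ℝ (Fin n) → ℂ) l *
                  Complex.exp (2 * (π : ℂ) * Complex.I * ((inner ℝ x l : ℝ) : ℂ))‖ ≤
              κ * (eLpNorm (fun l => (F (hf2.toLp f) : EuclideanSpace ℝ (Fin n) → ℂ) l /
                    ((Real.sqrt (ψ l) : ℝ) : ℂ)) 2
                  (volume : Measure (EuclideanSpace ℝ (Fin n)))).toReal :=
  rkhs_embeds_into_bounded_continuous_general F hF ψ hψi hψ0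
end

section
/- Let κ > 0. The family of Gaussian functions {x ↦ exp(−‖x − x₀‖²/(2κ²)) : x₀ ∈ ℝⁿ} has dense linear span over ℂ in L²(ℝⁿ, ℂ): for every f ∈ L²(ℝⁿ, ℂ) and every ε > 0 there exist p ≥ 1, points x₁, …, x_p ∈ ℝⁿ and coefficients a₁, …, a_p ∈ ℂ such that ‖f − ∑_{j=1}^p a_j exp(−‖· − x_j‖²/(2κ²))‖_{L²} < ε. -/
/-!
If `h ∈ L²` is orthogonal to every Gaussian centred at `κ² s`, completing the square shows that
`g y = exp (-‖y‖² / (2κ²)) h y` satisfies `∫ g y · exp ⟪s, y⟫ dy = 0` for every `s`, the integrals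
converging absolutely by Cauchy–Schwarz. Along a direction `t`, `z ↦ ∫ g y · exp (z ⟪t, y⟫) dy` is
an entire function vanishing on `ℝ`, hence everywhere; at `z = -2πi` this says that the Fourier
transform of `g` vanishes at `t`. So `g = 0`, hence `h = 0`: the span of the Gaussians has trivial
orthogonal complement in `L²`.
-/

open MeasureTheory Complex Real Finset Filter
open scoped Topology RealInnerProductSpace FourierTransform ComplexConjugate

lemma Complex.re_mul_ofReal_le (z : ℂ) (r : ℝ) : (z * r).re ≤ ‖z‖ * |r| := by
  rw [re_mul_ofReal]
  exact (le_abs_self _).trans ((abs_mul _ _).trans_le (by gcongr; exact abs_re_le_norm z))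

section LaplaceTransform

variable {α : Type*} [MeasurableSpace α] {μ : Measure α} {g : α → ℂ} {u : α → ℝ}

lemma integrable_norm_mul_exp_mul_abs (hg : AEStronglyMeasurable g μ) (hu : AEMeasurable u μ)
    (hexp : ∀ c : ℝ, Integrable (fun x => ‖g x‖ * rexp (c * u x)) μ) (c : ℝ) :
    Integrable (fun x => ‖g x‖ * rexp (c * |u x|)) μ := by
  refine ((hexp c).add (hexp (-c))).mono' (hg.norm.mul (by fun_prop)) (ae_of_all _ fun x => ?_)
  have := norm_nonneg (g x)
  rw [Real.norm_of_nonneg (by positivity), Pi.add_apply]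
  rcases abs_choice (u x) with h | h <;> rw [h]
  · nlinarith [Real.exp_pos (-c * u x)]
  · rw [mul_neg, ← neg_mul]; nlinarith [Real.exp_pos (c * u x)]

lemma differentiable_integral_mul_cexp_mul (hg : AEStronglyMeasurable g μ) (hu : AEMeasurable u μ)
    (hexp : ∀ c : ℝ, Integrable (fun x => ‖g x‖ * rexp (c * u x)) μ) :
    Differentiable ℂ fun z : ℂ => ∫ x, g x * cexp (z * u x) ∂μ := by
  intro z₀
  have hmeas : ∀ z : ℂ, AEStronglyMeasurable (fun x => g x * cexp (z * u x)) μ := fun z =>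
    hg.mul (by fun_prop)
  have hint : Integrable (fun x => g x * cexp (z₀ * u x)) μ := by
    refine (integrable_norm_mul_exp_mul_abs hg hu hexp ‖z₀‖).mono' (hmeas z₀)
      (ae_of_all _ fun x => ?_)
    rw [norm_mul, norm_exp]
    gcongr
    exact re_mul_ofReal_le z₀ (u x)
  -- `|u| ≤ exp |u|` absorbs the factor `u` of the derivative into the exponential bound
  have hbound : ∀ x, ∀ z ∈ Metric.ball z₀ 1,
      ‖g x * (cexp (z * u x) * u x)‖ ≤ ‖g x‖ * rexp ((‖z₀‖ + 2) * |u x|) := by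
    intro x z hz
    have hz : ‖z‖ ≤ ‖z₀‖ + 1 := by
      rw [mem_ball_iff_norm] at hz
      linarith [norm_le_insert' z z₀]
    have hre : (z * u x).re ≤ (‖z₀‖ + 1) * |u x| :=
      (re_mul_ofReal_le z (u x)).trans (by gcongr)
    rw [norm_mul, norm_mul, norm_exp, norm_real, Real.norm_eq_abs]
    calc ‖g x‖ * (rexp (z * u x).re * |u x|)
        ≤ ‖g x‖ * (rexp ((‖z₀‖ + 1) * |u x|) * rexp |u x|) := by
          gcongr; linarith [Real.add_one_le_exp |u x|]
      _ = ‖g x‖ * rexp ((‖z₀‖ + 2) * |u x|) := by rw [← Real.exp_add]; ring_nf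
  refine (hasDerivAt_integral_of_dominated_loc_of_deriv_le (Metric.ball_mem_nhds z₀ one_pos)
    (Eventually.of_forall hmeas) hint ?_ (ae_of_all _ hbound)
    (integrable_norm_mul_exp_mul_abs hg hu hexp _)
    (ae_of_all _ fun x z _ => ?_)).2.differentiableAt
  · exact hg.mul (by fun_prop)
  · exact ((hasDerivAt_mul_const (u x : ℂ)).cexp).const_mul (g x)

lemma integral_mul_cexp_mul_eq_zero_of_real (hg : AEStronglyMeasurable g μ)
    (hu : AEMeasurable u μ) (hexp : ∀ c : ℝ, Integrable (fun x => ‖g x‖ * rexp (c * u x)) μ)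
    (h0 : ∀ r : ℝ, ∫ x, g x * cexp (r * u x) ∂μ = 0) (z : ℂ) :
    ∫ x, g x * cexp (z * u x) ∂μ = 0 := by
  have hF := differentiable_integral_mul_cexp_mul hg hu hexp
  have hreal : Tendsto ofReal (𝓝[≠] 0) (𝓝[≠] 0) :=
    continuous_ofReal.continuousWithinAt.tendsto_nhdsWithin fun _ _ ↦ by simp_all
  have hA : AnalyticOnNhd ℂ (fun z : ℂ => ∫ x, g x * cexp (z * u x) ∂μ) Set.univ :=
    fun w _ => hF.analyticAt w
  exact congrFun (hA.eq_of_frequently_eq analyticOnNhd_const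
    (hreal.frequently (Frequently.of_forall h0))) z

end LaplaceTransform

section FourierUniqueness

variable {V : Type*} [NormedAddCommGroup V] [InnerProductSpace ℝ V] [FiniteDimensional ℝ V]
  [MeasurableSpace V] [BorelSpace V]

theorem ae_eq_zero_of_fourier_eq_zero {E : Type*} [NormedAddCommGroup E] [NormedSpace ℂ E]
    [CompleteSpace E] {g : V → E} (hg : Integrable g) (h : 𝓕 g = 0) : g =ᵐ[volume] 0 := by
  refine ae_eq_zero_of_integral_contDiff_smul_eq_zero hg.locallyIntegrable fun φ hφ hφc => ?_
  let Φ : SchwartzMap V ℂ :=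
    (hφc.comp_left ofReal_zero).toSchwartzMap (ofRealCLM.contDiff.comp hφ)
  let ψ : SchwartzMap V ℂ := 𝓕⁻ Φ
  have hψ : 𝓕 (ψ : V → ℂ) = fun x => (φ x : ℂ) := by
    rw [← SchwartzMap.fourier_coe, FourierTransform.fourier_fourierInv_eq]
    rfl
  calc ∫ x, φ x • g x = ∫ x, 𝓕 (ψ : V → ℂ) x • g x := by simp [hψ]
    _ = ∫ x, ψ x • 𝓕 g x := by
      have := VectorFourier.integral_fourierIntegral_smul_eq_flip (L := innerₗ V)
        continuous_fourierChar continuous_inner (ψ.integrable (μ := volume)) hg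
      rwa [flip_innerₗ] at this
    _ = 0 := by simp [h]

theorem ae_eq_zero_of_integral_mul_cexp_inner_eq_zero {g : V → ℂ}
    (hg : AEStronglyMeasurable g) (hexp : ∀ s : V, Integrable fun x => ‖g x‖ * rexp ⟪s, x⟫)
    (h0 : ∀ s : V, ∫ x, g x * cexp ⟪s, x⟫ = 0) : g =ᵐ[volume] 0 := by
  have hint : Integrable g := (integrable_norm_iff hg).1 (by simpa using hexp 0)
  refine ae_eq_zero_of_fourier_eq_zero hint (funext fun t => ?_)
  have := integral_mul_cexp_mul_eq_zero_of_real (u := fun x => ⟪t, x⟫) hg (by fun_prop)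
    (fun c => by simpa [inner_smul_left] using hexp (c • t))
    (fun r => by simpa [inner_smul_left] using h0 (r • t)) (-2 * π * I)
  rw [Real.fourier_eq', Pi.zero_apply, ← this]
  congr 1 with x
  rw [real_inner_comm, smul_eq_mul, mul_comm]
  push_cast
  ring_nf

end FourierUniqueness

section DenseSpan

variable {α ι 𝕜 : Type*} [MeasurableSpace α] {μ : Measure α} [RCLike 𝕜] {q : ENNReal} [Fact (1 ≤ q)]

theorem exists_eLpNorm_sub_sum_lt [Nonempty ι] {G : ι → α → 𝕜} (hG : ∀ i, MemLp (G i) q μ)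
    (hdense : Dense (Submodule.span 𝕜 (Set.range fun i => (hG i).toLp) : Set (Lp 𝕜 q μ)))
    {f : α → 𝕜} (hf : MemLp f q μ) {ε : ℝ} (hε : 0 < ε) :
    ∃ (p : ℕ) (_ : 1 ≤ p) (x : Fin p → ι) (a : Fin p → 𝕜),
      eLpNorm (fun y => f y - ∑ j : Fin p, a j * G (x j) y) q μ < ENNReal.ofReal ε := by
  obtain ⟨s, hs, hdist⟩ := hdense.exists_dist_lt (hf.toLp f) hε
  obtain ⟨m, a, v, rfl⟩ := Submodule.mem_span_set'.1 hs
  choose x hx using fun j => (v j).2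
  refine ⟨m + 1, by omega, Fin.cons (Classical.arbitrary ι) x, Fin.cons 0 a, ?_⟩
  have hsum : (fun y => f y - ∑ j : Fin (m + 1), (Fin.cons 0 a : Fin (m + 1) → 𝕜) j *
      G ((Fin.cons (Classical.arbitrary ι) x : Fin (m + 1) → ι) j) y) =ᵐ[μ]
      ⇑(hf.toLp f - ∑ j, a j • (v j : Lp 𝕜 q μ)) := by
    simp only [← hx]
    filter_upwards [Lp.coeFn_sub (hf.toLp f) _, hf.coeFn_toLp,
      Lp.coeFn_fun_finsetSum univ fun j => a j • (hG (x j)).toLp,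
      ae_all_iff.2 fun j => Lp.coeFn_smul (a j) (hG (x j)).toLp,
      ae_all_iff.2 fun j => (hG (x j)).coeFn_toLp] with y hsub hfy hsum hsmul hGy
    rw [hsub, Pi.sub_apply, hfy, hsum, Fin.sum_univ_succ]
    simp only [hsmul, hGy, Pi.smul_apply, smul_eq_mul, Fin.cons_zero, Fin.cons_succ, zero_mul,
      zero_add]
  rw [eLpNorm_congr_ae hsum, ← Lp.enorm_def, ← ofReal_norm,
    ENNReal.ofReal_lt_ofReal_iff hε, ← dist_eq_norm]
  exact hdist

end DenseSpan

section GaussianKernel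

variable {V : Type*} [NormedAddCommGroup V] {κ : ℝ}

noncomputable def gaussianKernel (κ : ℝ) (x₀ y : V) : ℂ :=
  cexp (-((‖y - x₀‖ ^ 2 / (2 * κ ^ 2) : ℝ) : ℂ))

lemma gaussianKernel_eq_ofReal (x₀ y : V) :
    gaussianKernel κ x₀ y = (rexp (-(‖y - x₀‖ ^ 2 / (2 * κ ^ 2))) : ℂ) := by
  rw [gaussianKernel, ofReal_exp, ofReal_neg]

lemma conj_gaussianKernel (x₀ y : V) : conj (gaussianKernel κ x₀ y) = gaussianKernel κ x₀ y := by
  rw [gaussianKernel_eq_ofReal, conj_ofReal]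

variable [InnerProductSpace ℝ V]

lemma gaussianKernel_sq_smul (hκ : κ ≠ 0) (s y : V) :
    gaussianKernel κ (κ ^ 2 • s) y =
      rexp (-(κ ^ 2 * ‖s‖ ^ 2 / 2)) * (gaussianKernel κ 0 y * cexp ⟪s, y⟫) := by
  simp only [gaussianKernel_eq_ofReal, sub_zero, ← ofReal_exp, ← ofReal_mul, ← Real.exp_add]
  congr 2
  rw [norm_sub_sq_real, inner_smul_right, norm_smul, Real.norm_of_nonneg (by positivity),
    real_inner_comm]
  field_simp
  ring

variable [FiniteDimensional ℝ V] [MeasurableSpace V] [BorelSpace V]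

lemma memLp_gaussianKernel (hκ : κ ≠ 0) (x₀ : V) : MemLp (gaussianKernel κ x₀) 2 := by
  have hcont : Continuous (gaussianKernel κ x₀) := by unfold gaussianKernel; fun_prop
  rw [memLp_two_iff_integrable_sq_norm hcont.aestronglyMeasurable]
  have hb : 0 < ((1 / κ ^ 2 : ℝ) : ℂ).re := by rw [ofReal_re]; positivity
  refine ((GaussianFourier.integrable_cexp_neg_mul_sq_norm_add hb 0 (0 : V)).norm.comp_sub_right
    x₀).congr (ae_of_all _ fun y => ?_)
  dsimp only
  rw [gaussianKernel_eq_ofReal, norm_real, Real.norm_of_nonneg (Real.exp_nonneg _),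
    ← Real.exp_nat_mul, zero_mul, add_zero, ← ofReal_pow, ← ofReal_neg, ← ofReal_mul,
    norm_exp_ofReal]
  congr 1
  push_cast
  field_simp

lemma ae_eq_zero_of_forall_integral_gaussianKernel_mul_eq_zero (hκ : κ ≠ 0) {h : V → ℂ}
    (hh : MemLp h 2) (horth : ∀ x₀, ∫ y, gaussianKernel κ x₀ y * h y = 0) : h =ᵐ[volume] 0 := by
  set g : V → ℂ := fun y => gaussianKernel κ 0 y * h y
  have hsplit : ∀ s y, gaussianKernel κ (κ ^ 2 • s) y * h y =
      rexp (-(κ ^ 2 * ‖s‖ ^ 2 / 2)) * (g y * cexp ⟪s, y⟫) := fun s y => by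
    rw [gaussianKernel_sq_smul hκ]; ring
  have h0 : ∀ s : V, ∫ y, g y * cexp ⟪s, y⟫ = 0 := fun s => by
    have := horth (κ ^ 2 • s)
    simp_rw [hsplit, integral_const_mul] at this
    exact (mul_eq_zero.1 this).resolve_left (by exact_mod_cast (Real.exp_pos _).ne')
  have hexp : ∀ s : V, Integrable fun y => ‖g y‖ * rexp ⟪s, y⟫ := fun s => by
    refine (((memLp_gaussianKernel hκ (κ ^ 2 • s)).integrable_mul hh).norm.const_mul
      (rexp (κ ^ 2 * ‖s‖ ^ 2 / 2))).congr (ae_of_all _ fun y => ?_)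
    dsimp only
    rw [Pi.mul_apply, hsplit, norm_mul, norm_mul, norm_real,
      Real.norm_of_nonneg (Real.exp_nonneg _), norm_exp_ofReal, ← mul_assoc, ← Real.exp_add,
      add_neg_cancel, Real.exp_zero, one_mul]
  have hg : AEStronglyMeasurable g :=
    (memLp_gaussianKernel hκ 0).aestronglyMeasurable.mul hh.aestronglyMeasurable
  filter_upwards [ae_eq_zero_of_integral_mul_cexp_inner_eq_zero hg hexp h0] with y hy
  exact (mul_eq_zero.1 hy).resolve_left (Complex.exp_ne_zero _)

theorem dense_span_gaussianKernel (hκ : κ ≠ 0) :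
    Dense (Submodule.span ℂ (Set.range fun x₀ : V => (memLp_gaussianKernel hκ x₀).toLp) :
      Set (Lp ℂ 2 (volume : Measure V))) := by
  rw [Submodule.dense_iff_topologicalClosure_eq_top, Submodule.topologicalClosure_eq_top_iff,
    Submodule.eq_bot_iff]
  intro h hh
  rw [Lp.eq_zero_iff_ae_eq_zero]
  refine ae_eq_zero_of_forall_integral_gaussianKernel_mul_eq_zero hκ (Lp.memLp h) fun x₀ => ?_
  have := (Submodule.mem_orthogonal _ h).1 hh _ (Submodule.subset_span ⟨x₀, rfl⟩)
  rw [L2.inner_def] at this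
  rw [← this]
  refine integral_congr_ae ?_
  filter_upwards [(memLp_gaussianKernel hκ x₀).coeFn_toLp] with y hy
  rw [hy, RCLike.inner_apply, conj_gaussianKernel, mul_comm]

end GaussianKernel

/-- For any `κ > 0`, the family of Gaussians `x ↦ exp(-‖x - x₀‖²/(2κ²))`,
`x₀ ∈ ℝⁿ`, has dense linear span over `ℂ` in `L²(ℝⁿ, ℂ)`: every square-integrable `f` can be
approximated in the `L²` norm, to any accuracy `ε > 0`, by finite complex linear combinations of
such Gaussians. -/
theorem gaussian_kernel_L2_universal
    {n : ℕ} (κ : ℝ) (hκ : 0 < κ)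
    (f : EuclideanSpace ℝ (Fin n) → ℂ)
    (hf : MemLp f 2 (volume : Measure (EuclideanSpace ℝ (Fin n)))) :
    ∀ ε : ℝ, 0 < ε →
      ∃ (p : ℕ) (_ : 1 ≤ p) (x : Fin p → EuclideanSpace ℝ (Fin n)) (a : Fin p → ℂ),
        eLpNorm (fun y : EuclideanSpace ℝ (Fin n) =>
            f y - ∑ j : Fin p, a j *
              Complex.exp (-(((‖y - x j‖ ^ 2 / (2 * κ ^ 2) : ℝ)) : ℂ))) 2
          (volume : Measure (EuclideanSpace ℝ (Fin n))) < ENNReal.ofReal ε := fun _ hε =>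
  exists_eLpNorm_sub_sum_lt _ (dense_span_gaussianKernel hκ.ne') hf hε
end

section
/- Let n ≥ 1 and α > 0 be real, and let x₀ be a fixed real symmetric positive-definite n×n matrix. Then the section y ↦ k_α(x₀, y) = (det x₀ · det y / det(x₀ + y)²)^α of the Beta-prime kernel vanishes at infinity on the open cone of positive-definite matrices: for every ε > 0, the set {y : y is a real symmetric positive-definite n×n matrix and (det x₀ · det y / det(x₀+y)²)^α ≥ ε} is a compact subset of the space of real symmetric n×n matrices. -/
/-!
If `x₀ - c • 1` is positive semidefinite with `c > 0`, monotonicity of the determinant gives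
`det (x₀ + y) ≥ det (c • 1 + y) = ∏ i, (c + μ i)` for the eigenvalues `μ` of `y`, hence
`det x₀ * det y / det (x₀ + y) ^ 2 ≤ det x₀ * ∏ i, μ i / (c + μ i) ^ 2`. Every factor is at most
`(4 * c)⁻¹`, and the `k`-th one is at most `1 / μ k`, so a lower bound `ε` on the kernel bounds
every eigenvalue of `y`, hence its trace, hence all of its entries. The kernel is continuous on
the closed cone of positive semidefinite matrices and vanishes where `det y = 0`, so the
superlevel set in the open cone is also closed.
-/

open Matrix Unitary

lemma prod_div_add_sq_le {ι : Type*} [Fintype ι] [DecidableEq ι] {c : ℝ} (hc : 0 < c)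
    {μ : ι → ℝ} (hμ : ∀ i, 0 < μ i) (k : ι) :
    ∏ i, μ i / (c + μ i) ^ 2 ≤ (4 * c)⁻¹ ^ (Fintype.card ι - 1) / μ k := by
  have hle_inv (i : ι) : μ i / (c + μ i) ^ 2 ≤ (4 * c)⁻¹ := by
    rw [div_le_iff₀ (by nlinarith [hμ i]), ← div_eq_inv_mul, le_div_iff₀ (by positivity)]
    nlinarith [sq_nonneg (c - μ i)]
  have hk : μ k / (c + μ k) ^ 2 ≤ 1 / μ k := by
    rw [div_le_div_iff₀ (by nlinarith [hμ k]) (hμ k)]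
    nlinarith [hμ k]
  rw [← Finset.mul_prod_erase _ _ (Finset.mem_univ k)]
  calc μ k / (c + μ k) ^ 2 * ∏ i ∈ Finset.univ.erase k, μ i / (c + μ i) ^ 2
      ≤ 1 / μ k * ∏ _i ∈ Finset.univ.erase k, (4 * c)⁻¹ :=
        mul_le_mul hk (Finset.prod_le_prod (fun i _ => by have := hμ i; positivity)
          fun i _ => hle_inv i) (Finset.prod_nonneg fun i _ => by have := hμ i; positivity)
          (by have := hμ k; positivity)
    _ = (4 * c)⁻¹ ^ (Fintype.card ι - 1) / μ k := by
        rw [Finset.prod_const, Finset.card_erase_of_mem (Finset.mem_univ k), Finset.card_univ]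
        ring

noncomputable def betaPrimeKernel {ι : Type*} [Fintype ι] [DecidableEq ι] (α : ℝ)
    (x y : Matrix ι ι ℝ) : ℝ :=
  (x.det * y.det / (x + y).det ^ 2) ^ α

namespace Matrix

lemma det_conjStarAlgAut {ι R : Type*} [Fintype ι] [DecidableEq ι] [CommRing R] [StarRing R]
    (u : unitary (Matrix ι ι R)) (M : Matrix ι ι R) :
    (conjStarAlgAut R _ u M).det = M.det := by
  rw [conjStarAlgAut_apply, det_mul_comm, ← Matrix.mul_assoc, coe_star_mul_self, Matrix.one_mul]

variable {ι : Type*} [Fintype ι]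

lemma isClosed_setOf_posSemidef : IsClosed {A : Matrix ι ι ℝ | A.PosSemidef} := by
  simp only [posSemidef_iff_dotProduct_mulVec, Set.ofPred_and, Set.ofPred_forall]
  exact (isClosed_eq continuous_id.matrix_conjTranspose continuous_id).inter <|
    isClosed_iInter fun x => isClosed_le continuous_const <|
      continuous_const.dotProduct (continuous_id.matrix_mulVec continuous_const)

variable [DecidableEq ι]

lemma IsHermitian.det_smul_one_add {A : Matrix ι ι ℝ} (hA : A.IsHermitian) (c : ℝ) :
    (c • 1 + A).det = ∏ i, (c + hA.eigenvalues i) := by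
  rw [← det_conjStarAlgAut (star hA.eigenvectorUnitary), map_add, map_smul, map_one,
    conjStarAlgAut_star_eigenvectorUnitary, smul_one_eq_diagonal, diagonal_add, det_diagonal]
  rfl

lemma PosSemidef.one_le_det_one_add {C : Matrix ι ι ℝ} (hC : C.PosSemidef) :
    1 ≤ (1 + C).det := by
  rw [← one_smul ℝ (1 : Matrix ι ι ℝ), hC.isHermitian.det_smul_one_add]
  exact Finset.one_le_prod fun i _ => by linarith [hC.eigenvalues_nonneg i]

open scoped MatrixOrder in
lemma PosDef.det_le_det_add {E A : Matrix ι ι ℝ} (hE : E.PosDef) (hA : A.PosSemidef) :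
    E.det ≤ (E + A).det := by
  obtain ⟨B, rfl⟩ := CStarAlgebra.nonneg_iff_eq_star_mul_self.mp hA.nonneg
  rw [det_add_mul _ _ (isUnit_iff_ne_zero.mpr hE.det_pos.ne'), star_eq_conjTranspose]
  exact le_mul_of_one_le_right hE.det_pos.le
    (hE.inv.posSemidef.mul_mul_conjTranspose_same B).one_le_det_one_add

open scoped MatrixOrder in
lemma PosDef.exists_pos_posSemidef_sub_smul_one {A : Matrix ι ι ℝ} (hA : A.PosDef) :
    ∃ c : ℝ, 0 < c ∧ (A - c • 1).PosSemidef := by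
  cases subsingleton_or_nontrivial (Matrix ι ι ℝ) with
  | inl _ => exact ⟨1, one_pos, by rw [Subsingleton.elim (A - 1 • 1) 0]; exact .zero⟩
  | inr _ =>
    obtain ⟨c, hc, hcA⟩ := (CFC.exists_pos_algebraMap_le_iff hA.isHermitian.isSelfAdjoint).mpr
      fun x hx => hA.isStrictlyPositive.spectrum_pos hx
    rw [Algebra.algebraMap_eq_smul_one] at hcA
    exact ⟨c, hc, hcA⟩

lemma PosSemidef.abs_apply_le_trace {A : Matrix ι ι ℝ} (hA : A.PosSemidef) (i j : ι) :
    |A i j| ≤ A.trace := by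
  have hquad (s : ℝ) : 0 ≤ A i i + 2 * s * A i j + s ^ 2 * A j j := by
    have := hA.dotProduct_mulVec_nonneg (Pi.single i 1 + s • Pi.single j 1)
    simp only [star_trivial, mulVec_add, mulVec_smul, mulVec_single_one, dotProduct_add,
      add_dotProduct, dotProduct_smul, smul_dotProduct, single_one_dotProduct, col_apply,
      smul_eq_mul] at this
    have hsymm : A j i = A i j := by simpa using hA.isHermitian.apply i j
    rw [hsymm] at this
    linarith
  have hdiag_le (k : ι) : A k k ≤ A.trace :=
    Finset.single_le_sum (f := fun l => A l l) (fun l _ => hA.diag_nonneg) (Finset.mem_univ k)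
  have h₁ := hquad 1
  have h₂ := hquad (-1)
  rw [abs_le]
  constructor <;> nlinarith [hdiag_le i, hdiag_le j]

lemma isCompact_setOf_posSemidef_trace_le (R : ℝ) :
    IsCompact {A : Matrix ι ι ℝ | A.PosSemidef ∧ A.trace ≤ R} := by
  refine (isCompact_univ_pi fun _ => isCompact_univ_pi fun _ => isCompact_Icc (a := -R) (b := R))
    |>.of_isClosed_subset ?_ ?_
  · exact isClosed_setOf_posSemidef.inter
      (isClosed_le continuous_id.matrix_trace continuous_const)
  · rintro A ⟨hA, hAR⟩
    simp only [Set.mem_univ_pi]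
    exact fun i j => abs_le.mp ((hA.abs_apply_le_trace i j).trans hAR)

lemma det_mul_det_div_det_add_sq_le {x y : Matrix ι ι ℝ} {c : ℝ} (hx : x.PosDef) (hc : 0 < c)
    (hxc : (x - c • 1).PosSemidef) (hy : y.PosDef) :
    x.det * y.det / (x + y).det ^ 2 ≤
      x.det * ∏ i, hy.isHermitian.eigenvalues i / (c + hy.isHermitian.eigenvalues i) ^ 2 := by
  have hμ := hy.eigenvalues_pos
  have hshift : ∏ i, (c + hy.isHermitian.eigenvalues i) ≤ (x + y).det := by
    rw [← hy.isHermitian.det_smul_one_add, show x + y = (c • 1 + y) + (x - c • 1) by abel]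
    exact ((PosDef.one.smul hc).add hy).det_le_det_add hxc
  have hy_det : y.det = ∏ i, hy.isHermitian.eigenvalues i := by
    simpa using hy.isHermitian.det_eq_prod_eigenvalues
  calc x.det * y.det / (x + y).det ^ 2
      ≤ x.det * y.det / (∏ i, (c + hy.isHermitian.eigenvalues i)) ^ 2 := by
        have hprod : 0 < ∏ i, (c + hy.isHermitian.eigenvalues i) :=
          Finset.prod_pos fun i _ => by linarith [hμ i]
        have := hx.det_pos
        have := hy.det_pos
        gcongr
    _ = _ := by rw [hy_det, mul_div_assoc, ← Finset.prod_pow, ← Finset.prod_div_distrib]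

lemma trace_le_of_le_det_mul_det_div {x y : Matrix ι ι ℝ} {c δ : ℝ} (hx : x.PosDef)
    (hc : 0 < c) (hxc : (x - c • 1).PosSemidef) (hy : y.PosDef) (hδ : 0 < δ)
    (h : δ ≤ x.det * y.det / (x + y).det ^ 2) :
    y.trace ≤ Fintype.card ι * (x.det * (4 * c)⁻¹ ^ (Fintype.card ι - 1) / δ) := by
  have hμ := hy.eigenvalues_pos
  have heig (k : ι) :
      hy.isHermitian.eigenvalues k ≤ x.det * (4 * c)⁻¹ ^ (Fintype.card ι - 1) / δ := by
    have := h.trans <| (det_mul_det_div_det_add_sq_le hx hc hxc hy).trans <|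
      mul_le_mul_of_nonneg_left (prod_div_add_sq_le hc hμ k) hx.det_pos.le
    rw [← mul_div_assoc, le_div_iff₀ (hμ k)] at this
    rwa [le_div_iff₀ hδ, mul_comm]
  rw [hy.isHermitian.trace_eq_sum_eigenvalues]
  simpa using Finset.sum_le_sum fun k (_ : k ∈ Finset.univ) => heig k

lemma trace_le_of_le_betaPrimeKernel {x y : Matrix ι ι ℝ} {c α ε : ℝ} (hx : x.PosDef)
    (hc : 0 < c) (hxc : (x - c • 1).PosSemidef) (hy : y.PosDef) (hα : 0 < α) (hε : 0 < ε)
    (h : ε ≤ betaPrimeKernel α x y) :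
    y.trace ≤ Fintype.card ι * (x.det * (4 * c)⁻¹ ^ (Fintype.card ι - 1) / ε ^ α⁻¹) := by
  have := hx.det_pos
  have := hy.det_pos
  exact trace_le_of_le_det_mul_det_div hx hc hxc hy (Real.rpow_pos_of_pos hε _)
    ((Real.rpow_inv_le_iff_of_pos hε.le (by positivity) hα).mpr h)

lemma continuousOn_betaPrimeKernel {α : ℝ} {x : Matrix ι ι ℝ} (hα : 0 ≤ α) (hx : x.PosDef) :
    ContinuousOn (betaPrimeKernel α x) {y | y.PosSemidef} := by
  refine ContinuousOn.rpow_const ?_ fun _ _ => Or.inr hα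
  exact (continuous_const.mul continuous_id.matrix_det).continuousOn.div
    ((continuous_const.add continuous_id).matrix_det.pow 2).continuousOn
    fun y hy => pow_ne_zero 2 (hx.add_posSemidef hy).det_pos.ne'

lemma setOf_posDef_le_betaPrimeKernel {α ε : ℝ} (hα : α ≠ 0) (hε : 0 < ε) (x : Matrix ι ι ℝ) :
    {y | y.PosDef ∧ ε ≤ betaPrimeKernel α x y} =
      {y | y.PosSemidef ∧ ε ≤ betaPrimeKernel α x y} := by
  ext y
  refine ⟨fun ⟨hy, h⟩ => ⟨hy.posSemidef, h⟩, fun ⟨hy, h⟩ => ⟨hy.posDef_iff_det_ne_zero.mpr ?_, h⟩⟩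
  intro hdet
  rw [betaPrimeKernel, hdet, mul_zero, zero_div, Real.zero_rpow hα] at h
  exact h.not_gt hε

end Matrix

theorem betaPrime_section_vanishes_at_infinity_general
    (n : ℕ) (α : ℝ) (hα : 0 < α)
    (x₀ : Matrix (Fin n) (Fin n) ℝ) (hx₀ : x₀.PosDef) :
    ∀ ε : ℝ, 0 < ε →
      IsCompact {y : Matrix (Fin n) (Fin n) ℝ |
        y.PosDef ∧ ε ≤ (x₀.det * y.det / ((x₀ + y).det) ^ 2) ^ α} := by
  intro ε hε
  change IsCompact {y | y.PosDef ∧ ε ≤ betaPrimeKernel α x₀ y}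
  obtain ⟨c, hc, hx₀c⟩ := hx₀.exists_pos_posSemidef_sub_smul_one
  have hclosed : IsClosed {y | y.PosDef ∧ ε ≤ betaPrimeKernel α x₀ y} := by
    rw [setOf_posDef_le_betaPrimeKernel hα.ne' hε]
    exact (continuousOn_betaPrimeKernel hα.le hx₀).preimage_isClosed_of_isClosed
      isClosed_setOf_posSemidef isClosed_Ici
  exact (isCompact_setOf_posSemidef_trace_le _).of_isClosed_subset hclosed fun y ⟨hy, hεy⟩ =>
    ⟨hy.posSemidef, trace_le_of_le_betaPrimeKernel hx₀ hc hx₀c hy hα hε hεy⟩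

/-- For `n ≥ 1`, real `α > 0` and a fixed real symmetric positive-definite
`n×n` matrix `x₀`, the section `y ↦ k_α(x₀,y) = (det x₀ · det y / det(x₀+y)²)^α` of the
Beta-prime kernel vanishes at infinity on the open cone of positive-definite matrices: each of
its superlevel sets is a compact subset of the space of real symmetric `n×n` matrices. -/
theorem betaPrime_section_vanishes_at_infinity
    (n : ℕ) (hn : 1 ≤ n) (α : ℝ) (hα : 0 < α)
    (x₀ : Matrix (Fin n) (Fin n) ℝ) (hx₀ : x₀.PosDef) :
    ∀ ε : ℝ, 0 < ε →
      IsCompact {y : Matrix (Fin n) (Fin n) ℝ |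
        y.PosDef ∧ ε ≤ (x₀.det * y.det / ((x₀ + y).det) ^ 2) ^ α} :=
  betaPrime_section_vanishes_at_infinity_general n α hα x₀ hx₀
end
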